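/- Let n ≥ 1 and let V := ℝ^{n+2} × (ℝ^{n+2})* with B((x,ξ),(y,η)) := ξ(y) + η(x), and for g ∈ SL(n+2, ℝ) let η(g)(x,ξ) := (g x, ξ ∘ g⁻¹). Let v = (v₊, v₋) and w = (w₊, w₋) be elements of V with v₊, v₋, w₊, w₋ all nonzero, B(v, v) = 0 and B(w, w) = 0. Then there exists g ∈ SL(n+2, ℝ) such that η(g) maps the line ℝ·v onto the line ℝ·w, i.e. η(g)(v) = λ·w for some λ ∈ ℝ ∖ {0}. (SL(n+2,ℝ) acts transitively on real null-lines of V not contained in either factor.) -/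
import Mathlib

open Module

lemma toLin'_eq_mulVecLin {m : ℕ} (M : Matrix (Fin m) (Fin m) ℝ) :
    Matrix.toLin' M = M.mulVecLin := by
  ext x
  simp [Matrix.toLin'_apply, Matrix.mulVecLin_apply]

/-- Key normal form lemma: any pair (a, c) with c a = 0, a ≠ 0, c ≠ 0 can be
mapped to (e₀, e₁*) by a linear automorphism. -/
lemma key (m : ℕ) (hm : 2 ≤ m) (a : Fin m → ℝ) (c : Module.Dual ℝ (Fin m → ℝ))
    (ha : a ≠ 0) (hc : c ≠ 0) (hca : c a = 0) :
    ∃ f : (Fin m → ℝ) ≃ₗ[ℝ] (Fin m → ℝ),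
      f a = Pi.single (⟨0, by omega⟩ : Fin m) 1 ∧ ∀ x, f x ⟨1, by omega⟩ = c x := by
  set i0 : Fin m := ⟨0, by omega⟩
  set i1 : Fin m := ⟨1, by omega⟩
  have hi01 : i0 ≠ i1 := by simp [i0, i1, Fin.ext_iff]
  -- pick u with c u = 1
  obtain ⟨x0, hx0⟩ : ∃ x, c x ≠ 0 := by
    by_contra h
    push_neg at h
    exact hc (LinearMap.ext fun x => by simp [h x])
  set u : Fin m → ℝ := (c x0)⁻¹ • x0 with hu
  have hcu : c u = 1 := by simp [hu, inv_mul_cancel₀ hx0]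
  -- pick φ₀ with φ₀ a = 1
  obtain ⟨j, hj⟩ : ∃ j, a j ≠ 0 := by
    by_contra h
    push_neg at h
    exact ha (by ext j; simp [h j])
  set φ0 : Module.Dual ℝ (Fin m → ℝ) := (a j)⁻¹ • LinearMap.proj j with hφ0
  have hφ0a : φ0 a = 1 := by simp [hφ0, inv_mul_cancel₀ hj]
  set φ : Module.Dual ℝ (Fin m → ℝ) := φ0 - φ0 u • c with hφ
  have hφa : φ a = 1 := by simp [hφ, hca, hφ0a]
  have hφu : φ u = 0 := by simp [hφ, hcu]
  -- submodules
  set W : Submodule ℝ (Fin m → ℝ) := LinearMap.ker (φ.prod c) with hW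
  set e0 : Fin m → ℝ := Pi.single i0 1
  set e1 : Fin m → ℝ := Pi.single i1 1
  set ψ : (Fin m → ℝ) →ₗ[ℝ] ℝ × ℝ :=
    (LinearMap.proj i0 : (Fin m → ℝ) →ₗ[ℝ] ℝ).prod (LinearMap.proj i1) with hψ
  set U : Submodule ℝ (Fin m → ℝ) := LinearMap.ker ψ with hU
  -- surjectivity of both ℝ² valued maps
  have hsurj1 : Function.Surjective (φ.prod c) := by
    intro ⟨s, t⟩
    refine ⟨s • a + t • u, ?_⟩
    simp [LinearMap.prod_apply, hφa, hφu, hca, hcu, Prod.ext_iff]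
  have hsurj2 : Function.Surjective ψ := by
    intro ⟨s, t⟩
    refine ⟨s • e0 + t • e1, ?_⟩
    simp [hψ, e0, e1, Pi.single_apply, hi01, hi01.symm, Prod.ext_iff]
  have hrank : finrank ℝ W = finrank ℝ U := by
    have h1 := LinearMap.finrank_range_add_finrank_ker (φ.prod c)
    have h2 := LinearMap.finrank_range_add_finrank_ker ψ
    rw [LinearMap.range_eq_top.2 hsurj1, finrank_top] at h1
    rw [LinearMap.range_eq_top.2 hsurj2, finrank_top] at h2
    rw [hW, hU]
    omega
  obtain ⟨S⟩ := FiniteDimensional.nonempty_linearEquiv_of_finrank_eq hrank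
  -- the projection onto W
  set P0 : (Fin m → ℝ) →ₗ[ℝ] (Fin m → ℝ) :=
    LinearMap.id - φ.smulRight a - c.smulRight u with hP0
  have hP0mem : ∀ x, P0 x ∈ W := by
    intro x
    have h1 : φ (P0 x) = 0 := by
      simp [hP0, map_sub, map_smul, smul_eq_mul, hφa, hφu, hca, hcu]
    have h2 : c (P0 x) = 0 := by
      simp [hP0, map_sub, map_smul, smul_eq_mul, hφa, hφu, hca, hcu]
    exact LinearMap.mem_ker.2 (Prod.ext h1 h2)
  set P : (Fin m → ℝ) →ₗ[ℝ] W := LinearMap.codRestrict W P0 hP0mem with hP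
  set F : (Fin m → ℝ) →ₗ[ℝ] (Fin m → ℝ) :=
    φ.smulRight e0 + c.smulRight e1 + U.subtype ∘ₗ (S : W →ₗ[ℝ] U) ∘ₗ P with hF
  have hFapply : ∀ x, F x = φ x • e0 + c x • e1 + (S (P x) : Fin m → ℝ) := by
    intro x; rfl
  have hUcoord : ∀ z : U, (z : Fin m → ℝ) i0 = 0 ∧ (z : Fin m → ℝ) i1 = 0 := by
    intro z
    have h : ψ (z : Fin m → ℝ) = 0 := LinearMap.mem_ker.1 z.2
    exact ⟨congrArg Prod.fst h, congrArg Prod.snd h⟩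
  have hF0 : ∀ x, F x i0 = φ x := by
    intro x
    simp [hFapply, e0, e1, Pi.single_apply, hi01.symm, (hUcoord (S (P x))).1]
  have hF1 : ∀ x, F x i1 = c x := by
    intro x
    simp [hFapply, e0, e1, Pi.single_apply, hi01, (hUcoord (S (P x))).2]
  have hinj : Function.Injective F := by
    intro x y hxy
    rw [← sub_eq_zero, ← map_sub] at hxy
    set z := x - y with hz
    have hφz : φ z = 0 := by rw [← hF0 z, hxy]; simp [e0, e1]
    have hcz : c z = 0 := by rw [← hF1 z, hxy]; simp [e0, e1]
    have hS : (S (P z) : Fin m → ℝ) = 0 := by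
      have := hFapply z
      rw [hxy, hφz, hcz] at this
      simpa using this.symm
    have hPz : P z = 0 := by
      apply S.injective
      simp only [map_zero]
      exact Subtype.ext (by simpa using hS)
    have : P0 z = 0 := congrArg Subtype.val hPz
    have hz0 : z = 0 := by
      have h2 : z - φ z • a - c z • u = 0 := this
      rwa [hφz, hcz, zero_smul, zero_smul, sub_zero, sub_zero] at h2
    rw [← sub_eq_zero]; exact hz0
  have hbij : Function.Bijective F := ⟨hinj, LinearMap.injective_iff_surjective.1 hinj⟩
  refine ⟨LinearEquiv.ofBijective F hbij, ?_, ?_⟩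
  · show F a = e0
    have hPa : P0 a = 0 := by
      show a - φ a • a - c a • u = 0
      rw [hφa, hca]; simp
    have : (P a : Fin m → ℝ) = 0 := hPa
    rw [hFapply, hφa, hca]
    have : P a = 0 := Subtype.ext this
    rw [this]
    simp
  · intro x
    exact hF1 x



/-- The para-Hermitian inner product B((x,ξ),(y,η)) = ξ(y) + η(x) on
V = ℝ^m × (ℝ^m)*. -/
def Bfun (m : ℕ) (v w : (Fin m → ℝ) × Module.Dual ℝ (Fin m → ℝ)) : ℝ :=
  v.2 w.1 + w.2 v.1

/-- The action η(g)(x,ξ) = (g x, ξ ∘ g⁻¹) of g ∈ SL(m,ℝ) on V = ℝ^m × (ℝ^m)*. -/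
noncomputable def etaLin (m : ℕ) (g : Matrix.SpecialLinearGroup (Fin m) ℝ) :
    ((Fin m → ℝ) × Module.Dual ℝ (Fin m → ℝ)) →ₗ[ℝ]
      ((Fin m → ℝ) × Module.Dual ℝ (Fin m → ℝ)) :=
  LinearMap.prodMap ((g : Matrix (Fin m) (Fin m) ℝ).mulVecLin)
    (LinearMap.dualMap (((g⁻¹ : Matrix.SpecialLinearGroup (Fin m) ℝ) :
      Matrix (Fin m) (Fin m) ℝ).mulVecLin))

/-- SL(n+2,ℝ) acts transitively on real null-lines of V not contained in
either factor: given null vectors v = (v₊,v₋), w = (w₊,w₋) with all components nonzero,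
some η(g) maps the line ℝ·v onto the line ℝ·w. -/
theorem stmt_3 (n : ℕ) (hn : 1 ≤ n)
    (vp wp : Fin (n+2) → ℝ) (vm wm : Module.Dual ℝ (Fin (n+2) → ℝ))
    (hvp : vp ≠ 0) (hvm : vm ≠ 0) (hwp : wp ≠ 0) (hwm : wm ≠ 0)
    (hv : Bfun (n+2) (vp, vm) (vp, vm) = 0)
    (hw : Bfun (n+2) (wp, wm) (wp, wm) = 0) :
    ∃ (g : Matrix.SpecialLinearGroup (Fin (n+2)) ℝ) (lam : ℝ), lam ≠ 0 ∧
      etaLin (n+2) g (vp, vm) = lam • ((wp, wm) :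
        (Fin (n+2) → ℝ) × Module.Dual ℝ (Fin (n+2) → ℝ)) := by
  have hm : 2 ≤ n + 2 := by omega
  set i0 : Fin (n+2) := ⟨0, by omega⟩ with hi0
  set i1 : Fin (n+2) := ⟨1, by omega⟩ with hi1
  set k2 : Fin (n+2) := ⟨2, by omega⟩ with hk2
  have h02 : i0 ≠ k2 := by simp [hi0, hk2, Fin.ext_iff]
  have h12 : i1 ≠ k2 := by simp [hi1, hk2, Fin.ext_iff]
  -- nullity gives vm vp = 0 and wm wp = 0
  have hvnull : vm vp = 0 := by
    have : vm vp + vm vp = 0 := hv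
    linarith
  have hwnull : wm wp = 0 := by
    have : wm wp + wm wp = 0 := hw
    linarith
  obtain ⟨fv, hfv0, hfv1⟩ := key (n+2) hm vp vm hvp hvm hvnull
  obtain ⟨fw, hfw0, hfw1⟩ := key (n+2) hm wp wm hwp hwm hwnull
  set δ : ℝ := LinearMap.det (fw.symm.toLinearMap ∘ₗ fv.toLinearMap) with hδdef
  have hδ : δ ≠ 0 := by
    have : IsUnit (LinearMap.det ((fv.trans fw.symm) : (Fin (n+2) → ℝ) →ₗ[ℝ] (Fin (n+2) → ℝ))) :=
      LinearEquiv.isUnit_det' _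
    have he : ((fv.trans fw.symm) : (Fin (n+2) → ℝ) →ₗ[ℝ] (Fin (n+2) → ℝ))
        = fw.symm.toLinearMap ∘ₗ fv.toLinearMap := rfl
    rw [he] at this
    exact this.ne_zero
  set d : ℝ := δ⁻¹ with hd
  set Md : Matrix (Fin (n+2)) (Fin (n+2)) ℝ := Matrix.diagonal (fun i => if i = k2 then d else 1)
    with hMd
  set T : (Fin (n+2) → ℝ) →ₗ[ℝ] (Fin (n+2) → ℝ) :=
    fw.symm.toLinearMap ∘ₗ Md.mulVecLin ∘ₗ fv.toLinearMap with hT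
  have hdetMd : LinearMap.det Md.mulVecLin = d := by
    rw [← toLin'_eq_mulVecLin, LinearMap.det_toLin']
    simp [hMd, Matrix.det_diagonal, Finset.prod_ite_eq']
  have hdetT : LinearMap.det T = 1 := by
    rw [hT, LinearMap.det_comp, LinearMap.det_comp, hdetMd]
    have hδ' : δ = LinearMap.det fw.symm.toLinearMap * LinearMap.det fv.toLinearMap := by
      rw [hδdef, LinearMap.det_comp]
    have : LinearMap.det fw.symm.toLinearMap * (d * LinearMap.det fv.toLinearMap)
        = d * δ := by rw [hδ']; ring
    rw [this, hd, inv_mul_cancel₀ hδ]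
  set g : Matrix.SpecialLinearGroup (Fin (n+2)) ℝ :=
    ⟨LinearMap.toMatrix' T, by rw [LinearMap.det_toMatrix']; exact hdetT⟩ with hg
  have hgT : ((g : Matrix (Fin (n+2)) (Fin (n+2)) ℝ)).mulVecLin = T := by
    rw [← toLin'_eq_mulVecLin]
    exact Matrix.toLin'_toMatrix' T
  have hginvg : ((g⁻¹ : Matrix.SpecialLinearGroup (Fin (n+2)) ℝ) :
      Matrix (Fin (n+2)) (Fin (n+2)) ℝ).mulVecLin ∘ₗ ((g : Matrix (Fin (n+2)) (Fin (n+2)) ℝ)).mulVecLin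
      = LinearMap.id := by
    rw [← Matrix.mulVecLin_mul, ← Matrix.SpecialLinearGroup.coe_mul, inv_mul_cancel,
      Matrix.SpecialLinearGroup.coe_one, Matrix.mulVecLin_one]
  have hgginv : ((g : Matrix (Fin (n+2)) (Fin (n+2)) ℝ)).mulVecLin ∘ₗ
      ((g⁻¹ : Matrix.SpecialLinearGroup (Fin (n+2)) ℝ) :
      Matrix (Fin (n+2)) (Fin (n+2)) ℝ).mulVecLin = LinearMap.id := by
    rw [← Matrix.mulVecLin_mul, ← Matrix.SpecialLinearGroup.coe_mul, mul_inv_cancel,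
      Matrix.SpecialLinearGroup.coe_one, Matrix.mulVecLin_one]
  -- key pointwise claim: wm (T y) = vm y
  have hclaim : ∀ y, wm (T y) = vm y := by
    intro y
    have h1 : wm (fw.symm (Md.mulVecLin (fv y))) = (Md.mulVecLin (fv y)) i1 := by
      have := hfw1 (fw.symm (Md.mulVecLin (fv y)))
      rw [fw.apply_symm_apply] at this
      exact this.symm
    have h2 : (Md.mulVecLin (fv y)) i1 = fv y i1 := by
      rw [Matrix.mulVecLin_apply, hMd, Matrix.mulVec_diagonal, if_neg h12, one_mul]
    calc wm (T y) = wm (fw.symm (Md.mulVecLin (fv y))) := rfl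
      _ = (Md.mulVecLin (fv y)) i1 := h1
      _ = fv y i1 := h2
      _ = vm y := hfv1 y
  refine ⟨g, 1, one_ne_zero, ?_⟩
  rw [one_smul]
  simp only [etaLin, LinearMap.prodMap_apply]
  refine Prod.ext ?_ ?_
  · -- first component
    show ((g : Matrix (Fin (n+2)) (Fin (n+2)) ℝ)).mulVecLin vp = wp
    rw [hgT]
    have hMdfix : Md.mulVecLin (Pi.single i0 1) = Pi.single i0 1 := by
      rw [Matrix.mulVecLin_apply]
      funext i
      rw [hMd, Matrix.mulVec_diagonal]
      rcases eq_or_ne i i0 with h | h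
      · subst h; rw [if_neg h02, one_mul]
      · rw [Pi.single_eq_of_ne h, mul_zero]
    have : T vp = fw.symm (Pi.single i0 1) := by
      show fw.symm (Md.mulVecLin (fv vp)) = fw.symm (Pi.single i0 1)
      rw [hfv0, hMdfix]
    rw [this, ← hfw0, fw.symm_apply_apply]
  · -- second component
    show LinearMap.dualMap _ vm = wm
    apply LinearMap.ext
    intro x
    have hTy : T (((g⁻¹ : Matrix.SpecialLinearGroup (Fin (n+2)) ℝ) :
        Matrix (Fin (n+2)) (Fin (n+2)) ℝ).mulVecLin x) = x := by
      have := congrArg (fun F => F x) hgginv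
      simpa [hgT] using this
    have := hclaim (((g⁻¹ : Matrix.SpecialLinearGroup (Fin (n+2)) ℝ) :
        Matrix (Fin (n+2)) (Fin (n+2)) ℝ).mulVecLin x)
    rw [hTy] at this
    exact this.symm
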